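/- Let 𝓗(Υ) be the combinatorial horoball over a connected graph Υ. For vertices (v,0) and (w,0) on the base level with d_Υ(v,w) ≥ 1, the distance in 𝓗(Υ) satisfies d((v,0),(w,0)) ≥ 2 log d_Υ(v,w) − C for a universal constant C (independent of Υ, v, w). -/

import Mathlib

/-- The combinatorial horoball over a graph `G`: vertices `V × ℕ`; a vertical edge joins
`(v,n)` and `(v,n+1)`; a horizontal edge joins `(v,n)` and `(w,n)` when `d_G(v,w) ≤ eⁿ`. -/
def horoball {V : Type*} (G : SimpleGraph V) : SimpleGraph (V × ℕ) where
  Adj a b :=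
    (a.1 = b.1 ∧ (b.2 = a.2 + 1 ∨ a.2 = b.2 + 1)) ∨
    (a.2 = b.2 ∧ a.1 ≠ b.1 ∧ (G.dist a.1 b.1 : ℝ) ≤ Real.exp a.2)
  symm := by
    constructor
    rintro ⟨x, m⟩ ⟨y, n⟩ (⟨h1, h2⟩ | ⟨h1, h2, h3⟩)
    · exact Or.inl ⟨h1.symm, h2.symm⟩
    · refine Or.inr ⟨h1.symm, h2.symm, ?_⟩
      simp only at h1 h3 ⊢
      rw [SimpleGraph.dist_comm, ← h1]
      exact h3
  loopless := by
    constructor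
    rintro ⟨x, m⟩ (⟨_, h | h⟩ | ⟨_, h, _⟩)
    · omega
    · omega
    · exact h rfl

/-!
The function `f(x, n) = 2 log (max (d_G(v, x)) (2eⁿ)) - n` changes by at most `1` along every
edge of the horoball, so `d((v,0),(w,0)) ≥ f(w,0) - f(v,0) ≥ 2 log d_G(v,w) - 2 log 2`.
Along a vertical edge the argument of the logarithm grows by a factor between `1` and `e`;
along a horizontal edge at level `n` it changes by at most `eⁿ`, which is at most half of it.
-/

open Real

namespace SimpleGraph

variable {V : Type*} {G : SimpleGraph V} {f : V → ℝ}

theorem Walk.sub_le_length (hf : ∀ ⦃x y⦄, G.Adj x y → f y ≤ f x + 1) {a b : V}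
    (p : G.Walk a b) : f b - f a ≤ p.length := by
  induction p with
  | nil => simp
  | cons h p ih =>
    rw [length_cons, Nat.cast_succ]
    linarith [hf h]

theorem Reachable.sub_le_dist (hf : ∀ ⦃x y⦄, G.Adj x y → f y ≤ f x + 1) {a b : V}
    (h : G.Reachable a b) : f b - f a ≤ G.dist a b := by
  obtain ⟨p, hp⟩ := h.exists_walk_length_eq_dist
  exact hp ▸ p.sub_le_length hf

end SimpleGraph

noncomputable def horoPotential (r t : ℝ) : ℝ :=
  2 * log (max r (2 * exp t)) - t

lemma max_two_mul_exp_pos (r t : ℝ) : 0 < max r (2 * exp t) :=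
  lt_max_of_lt_right (by positivity)

lemma horoPotential_le_succ (r t : ℝ) : horoPotential r t ≤ horoPotential r (t + 1) + 1 := by
  have : log (max r (2 * exp t)) ≤ log (max r (2 * exp (t + 1))) :=
    log_le_log (max_two_mul_exp_pos r t) (max_le_max le_rfl (by gcongr; linarith))
  unfold horoPotential
  linarith

lemma horoPotential_succ_le (r t : ℝ) : horoPotential r (t + 1) ≤ horoPotential r t + 1 := by
  set A := max r (2 * exp t)
  have hA : 0 < A := max_two_mul_exp_pos r t
  have hB : max r (2 * exp (t + 1)) ≤ exp 1 * A := by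
    have hexp : 2 * exp (t + 1) = exp 1 * (2 * exp t) := by rw [exp_add]; ring
    refine max_le ?_ (hexp ▸ mul_le_mul_of_nonneg_left (le_max_right _ _) (exp_pos 1).le)
    exact (le_max_left _ _).trans (le_mul_of_one_le_left hA.le (one_le_exp zero_le_one))
  have : log (max r (2 * exp (t + 1))) ≤ 1 + log A := by
    calc log (max r (2 * exp (t + 1))) ≤ log (exp 1 * A) :=
          log_le_log (max_two_mul_exp_pos r (t + 1)) hB
      _ = 1 + log A := by rw [log_mul (exp_pos 1).ne' hA.ne', log_exp]
  unfold horoPotential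
  linarith

lemma horoPotential_le_add_one_of_le_add_exp {r r' t : ℝ} (h : r' ≤ r + exp t) :
    horoPotential r' t ≤ horoPotential r t + 1 := by
  set M := max r (2 * exp t)
  have hM : 0 < M := max_two_mul_exp_pos r t
  have hr : r ≤ M := le_max_left _ _
  have he : 2 * exp t ≤ M := le_max_right _ _
  have hM' : max r' (2 * exp t) ≤ 3 / 2 * M := max_le (by linarith) (by linarith)
  have : log (max r' (2 * exp t)) ≤ 1 / 2 + log M := by
    calc log (max r' (2 * exp t)) ≤ log (3 / 2 * M) :=
          log_le_log (max_two_mul_exp_pos r' t) hM'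
      _ = log (3 / 2) + log M := log_mul (by norm_num) hM.ne'
      _ ≤ 1 / 2 + log M := by linarith [log_le_sub_one_of_pos (by norm_num : (0 : ℝ) < 3 / 2)]
  unfold horoPotential
  linarith

section Horoball

variable {V : Type*} (G : SimpleGraph V)

@[simps]
def horoballBaseHom : G →g horoball G where
  toFun x := (x, 0)
  map_rel' h := Or.inr ⟨rfl, h.ne, by simp [SimpleGraph.dist_eq_one_iff_adj.mpr h]⟩

noncomputable def horoballPotential (v : V) (a : V × ℕ) : ℝ :=
  horoPotential (G.dist v a.1) a.2

variable {G}

lemma horoballPotential_le_add_one (hG : G.Connected) (v : V) ⦃a b : V × ℕ⦄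
    (h : (horoball G).Adj a b) : horoballPotential G v b ≤ horoballPotential G v a + 1 := by
  obtain ⟨x, m⟩ := a
  obtain ⟨y, n⟩ := b
  rcases h with ⟨rfl, h | h⟩ | ⟨rfl, -, hxy⟩
  · simp only at h
    subst h
    simpa [horoballPotential] using horoPotential_succ_le (G.dist v x) m
  · simp only at h
    subst h
    simpa [horoballPotential] using horoPotential_le_succ (G.dist v x) n
  · apply horoPotential_le_add_one_of_le_add_exp
    have : (G.dist v y : ℝ) ≤ G.dist v x + G.dist x y := by exact_mod_cast hG.dist_triangle
    exact this.trans (by simpa using hxy)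

end Horoball

/-- There is a universal constant `C` such that in the combinatorial horoball over any
connected graph, `d((v,0),(w,0)) ≥ 2 log d_G(v,w) − C` whenever `d_G(v,w) ≥ 1`. -/
theorem stmt_15 :
    ∃ C : ℝ, ∀ (V : Type) (G : SimpleGraph V), G.Connected → ∀ v w : V,
      1 ≤ G.dist v w →
      2 * Real.log (G.dist v w) - C ≤ ((horoball G).dist (v, 0) (w, 0) : ℝ) := by
  refine ⟨2 * log 2, fun V G hG v w hvw => ?_⟩
  have hdist := ((hG v w).map (horoballBaseHom G)).sub_le_dist
    (horoballPotential_le_add_one hG v)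
  have hv : horoballPotential G v (v, 0) = 2 * log 2 := by
    simp [horoballPotential, horoPotential]
  have hw : 2 * log (G.dist v w) ≤ horoballPotential G v (w, 0) := by
    have : (1 : ℝ) ≤ G.dist v w := by exact_mod_cast hvw
    simp only [horoballPotential, horoPotential, Nat.cast_zero, exp_zero, mul_one, sub_zero]
    exact mul_le_mul_of_nonneg_left (log_le_log (by linarith) (le_max_left _ _)) zero_le_two
  simp only [horoballBaseHom_apply] at hdist
  linarith
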